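/- arXiv:math/0511487 — 3 statements merged into one kernel-verified Lean document; each statement's English description precedes it below -/
import Mathlib

section
/- Let O be a commutative ring, p ∈ O, and let r₁, r_j, b be natural numbers with b ≤ r_j, and let u ∈ O be a unit. Then the 2×2 matrix with rows (p^{r₁}, 0) and (p^{r_j−b}·u, p^{r_j}) factors as E₁ · D · E₂ · E₃, where D = diag(p^{r₁+b}, p^{r_j−b}), E₁ is the upper unitriangular matrix with (1,2)-entry −p^{r₁+b−r_j}(p^b−1)u⁻¹ (interpreting p^{r₁+b−r_j} via r₁+b ≥ r_j when r₁ ≥ r_j), E₂ is the lower unitriangular matrix with (2,1)-entry u, and E₃ is the upper unitriangular matrix with (1,2)-entry (p^b−1)u⁻¹. -/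
/-- The degeneration identity: over a commutative ring `O`, for `r₁ ≥ r_j ≥ b` and a unit `u`,
the matrix `[[p^r₁, 0], [p^(r_j - b)·u, p^(r_j)]]` factors as
`E₁ · diag(p^(r₁+b), p^(r_j-b)) · E₂ · E₃` with `E₁, E₃` upper unitriangular and
`E₂` lower unitriangular. -/
theorem degeneration_factorization {O : Type*} [CommRing O] (p : O)
    (r₁ rj b : ℕ) (hb : b ≤ rj) (hr : rj ≤ r₁) (u : Oˣ) :
    (!![p ^ r₁, 0; p ^ (rj - b) * (u : O), p ^ rj] : Matrix (Fin 2) (Fin 2) O) =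
      !![1, -(p ^ (r₁ + b - rj) * (p ^ b - 1) * ((u⁻¹ : Oˣ) : O)); 0, 1] *
        !![p ^ (r₁ + b), 0; 0, p ^ (rj - b)] *
        !![1, 0; (u : O), 1] *
        !![1, (p ^ b - 1) * ((u⁻¹ : Oˣ) : O); 0, 1] := by
  have h1 : p ^ (r₁ + b - rj) * p ^ (rj - b) = p ^ r₁ := by
    rw [← pow_add]; congr 1; omega
  have h2 : p ^ (rj - b) * p ^ b = p ^ rj := by
    rw [← pow_add]; congr 1; omega
  have h3 : p ^ (r₁ + b) = p ^ r₁ * p ^ b := pow_add p r₁ b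
  have hu : ((u⁻¹ : Oˣ) : O) * (u : O) = 1 := by
    rw [← Units.val_mul, inv_mul_cancel, Units.val_one]
  have key : p ^ (r₁ + b - rj) * (p ^ b - 1) * ((u⁻¹ : Oˣ) : O) * p ^ (rj - b) * (u : O)
      = p ^ r₁ * (p ^ b - 1) := by
    linear_combination ((p ^ b - 1) * ((u⁻¹ : Oˣ) : O) * (u : O)) * h1 +
      ((p ^ b - 1) * p ^ r₁) * hu
  ext i j
  fin_cases i <;> fin_cases j <;> simp [Matrix.mul_apply, Fin.sum_univ_succ]
  · linear_combination key - h3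
  · linear_combination ((p ^ b - 1) * ((u⁻¹ : Oˣ) : O)) * (key + h1 - h3)
  · linear_combination -h2 - (p ^ (rj - b) * (p ^ b - 1)) * hu
end

section
/- Let O be a DVR with uniformizer p and valuation v_p, let n ≥ 2, and let γ = diag(p^{nr−i}, p^i, 1, ..., 1) be an n×n diagonal matrix with 0 ≤ i ≤ nr/2. Let P be the parabolic subgroup of GL_n(O) of block upper triangular matrices with blocks of sizes (1, n−1), and P⁻ the opposite block lower triangular subgroup. Then for every X ∈ P and Y ∈ P⁻ (so Y⁻¹ ∈ P⁻), the (1,1)-cofactor c(XγY⁻¹) := det of the matrix obtained by deleting the first row and first column of XγY⁻¹ satisfies v_p(c(XγY⁻¹)) ≥ i. -/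
open Matrix IsDiscreteValuationRing

/-! Since the first row of `Y⁻¹` vanishes off its first entry, the terms through the index `0` drop
out of the product, so the `(1,1)`-minor of `X γ Y⁻¹` factors as
`X₂₂ · diag(p^i, 1, …, 1) · (Y⁻¹)₂₂`; its determinant is therefore divisible by `p^i`. -/

namespace Matrix

theorem submatrix_succ_mul_of_row_zero {R : Type*} [NonUnitalNonAssocSemiring R] {l m k : ℕ}
    (A : Matrix (Fin (l + 1)) (Fin (m + 1)) R) (B : Matrix (Fin (m + 1)) (Fin (k + 1)) R)
    (hB : ∀ b, b ≠ 0 → B 0 b = 0) :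
    (A * B).submatrix Fin.succ Fin.succ =
      A.submatrix Fin.succ Fin.succ * B.submatrix Fin.succ Fin.succ := by
  ext a b
  simp [mul_apply, Fin.sum_univ_succ, hB b.succ (Fin.succ_ne_zero b)]

theorem det_submatrix_succ_mul_diagonal_mul {R : Type*} [CommRing R] {m : ℕ}
    (X Y : Matrix (Fin (m + 1)) (Fin (m + 1)) R) (d : Fin (m + 1) → R)
    (hY : ∀ b, b ≠ 0 → Y 0 b = 0) :
    ((X * diagonal d * Y).submatrix Fin.succ Fin.succ).det =
      (X.submatrix Fin.succ Fin.succ).det * (∏ j : Fin m, d j.succ) *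
        (Y.submatrix Fin.succ Fin.succ).det := by
  have hd : ∀ b, b ≠ 0 → diagonal d 0 b = 0 := fun b hb => diagonal_apply_ne d hb.symm
  rw [submatrix_succ_mul_of_row_zero _ _ hY, submatrix_succ_mul_of_row_zero _ _ hd,
    submatrix_diagonal _ _ (Fin.succ_injective _), det_mul, det_mul, det_diagonal]
  rfl

end Matrix

theorem Fin.prod_succ_ite_zero_ite_one {M : Type*} [CommMonoid M] {m : ℕ} (a b : M) :
    ∏ j : Fin (m + 1), (if j.succ = 0 then a else if j.succ = 1 then b else 1) = b := by
  simp [Fin.prod_univ_succ, Fin.succ_succ_ne_one]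

theorem cofactor_val_ge_general {O : Type*} [CommRing O] [IsDomain O] [IsDiscreteValuationRing O]
    (p : O) (hp : Irreducible p) (n r i : ℕ)
    (γ : Matrix (Fin (n + 2)) (Fin (n + 2)) O)
    (hγ : γ = Matrix.diagonal (fun j =>
      if j = 0 then p ^ ((n + 2) * r - i) else if j = 1 then p ^ i else 1))
    (X Y : GL (Fin (n + 2)) O)
    (hY : ∀ b : Fin (n + 2), b ≠ 0 →
      ((Y⁻¹ : GL (Fin (n + 2)) O) : Matrix (Fin (n + 2)) (Fin (n + 2)) O) 0 b = 0) :
    (i : ℕ∞) ≤ addVal O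
      (Matrix.det (((X : Matrix (Fin (n + 2)) (Fin (n + 2)) O) * γ *
        ((Y⁻¹ : GL (Fin (n + 2)) O) : Matrix (Fin (n + 2)) (Fin (n + 2)) O)).submatrix
          Fin.succ Fin.succ)) := by
  rw [← hp.addVal_pow, addVal_le_iff_dvd, hγ, det_submatrix_succ_mul_diagonal_mul _ _ _ hY,
    Fin.prod_succ_ite_zero_ite_one]
  exact (dvd_mul_left _ _).mul_right _

/-- Let `O` be a DVR with uniformizer `p`, `γ = diag(p^(nr−i), p^i, 1, …, 1)` of size `n ≥ 2`,
`X` in the block upper triangular parabolic `P` (blocks of sizes `(1, n−1)`), and `Y⁻¹` in the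
opposite parabolic `P⁻`.  Then the `(1,1)`-cofactor of `X·γ·Y⁻¹` (the determinant of the
matrix obtained by deleting the first row and column) has valuation `≥ i`. -/
theorem cofactor_val_ge {O : Type*} [CommRing O] [IsDomain O] [IsDiscreteValuationRing O]
    (p : O) (hp : Irreducible p) (n r i : ℕ) (hi : 2 * i ≤ (n + 2) * r)
    (γ : Matrix (Fin (n + 2)) (Fin (n + 2)) O)
    (hγ : γ = Matrix.diagonal (fun j =>
      if j = 0 then p ^ ((n + 2) * r - i) else if j = 1 then p ^ i else 1))
    (X Y : GL (Fin (n + 2)) O)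
    (hX : ∀ a : Fin (n + 2), a ≠ 0 → (X : Matrix (Fin (n + 2)) (Fin (n + 2)) O) a 0 = 0)
    (hY : ∀ b : Fin (n + 2), b ≠ 0 →
      ((Y⁻¹ : GL (Fin (n + 2)) O) : Matrix (Fin (n + 2)) (Fin (n + 2)) O) 0 b = 0) :
    (i : ℕ∞) ≤ addVal O
      (Matrix.det (((X : Matrix (Fin (n + 2)) (Fin (n + 2)) O) * γ *
        ((Y⁻¹ : GL (Fin (n + 2)) O) : Matrix (Fin (n + 2)) (Fin (n + 2)) O)).submatrix
          Fin.succ Fin.succ)) :=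
  cofactor_val_ge_general p hp n r i γ hγ X Y hY
end

section
/- Let O be a commutative ring, p ∈ O, and η = diag(p^{r₁}, ..., p^{r_n}) with r₁ ≥ ... ≥ r_n ≥ 0 integers. For indices 1 and j and an integer b with 0 ≤ b ≤ r_j and r₁ + b arbitrary, let η' = diag(p^{r₁+b}, p^{r₂}, ..., p^{r_j − b}, ..., p^{r_n}). Then for every unit t ∈ O, the matrix η(t) that agrees with η except for an additional entry p^{r_j − b}·t in position (j, 1) satisfies η(t) = x·η'·y⁻¹ for some x, y products of elementary unitriangular matrices over O, provided r₁ + b ≥ r_j. -/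
/-! Only rows and columns `0` and `j` are involved. On that block, with `e = p^(r_j-b)`,
`q = p^b` and `c = p^(r₀+b-r_j)` (a genuine power of `p` because `r_j ≤ r₀ + b`),
`[[c e, 0], [e t, e q]] · [[1, -(q-1) t⁻¹], [0, 1]] · [[1, 0], [-t, 1]]
  = [[1, -c (q-1) t⁻¹], [0, 1]] · diag(c e q, e)`,
and the transvections act trivially on the remaining diagonal entries. -/

namespace Matrix

variable {n R : Type*} [Fintype n] [DecidableEq n] [CommRing R]

theorem diagonal_mul_single (d : n → R) (i j : n) (c : R) :
    diagonal d * single i j c = single i j (d i * c) := by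
  ext a b
  simp only [diagonal_mul, single_apply]
  split_ifs with h <;> simp_all

theorem single_mul_diagonal (d : n → R) (i j : n) (c : R) :
    single i j c * diagonal d = single i j (c * d j) := by
  ext a b
  simp only [mul_diagonal, single_apply]
  split_ifs with h <;> simp_all

theorem transvection_mul_transvection_swap (i j : n) (x y : R) :
    transvection i j x * transvection j i y =
      1 + single i j x + single j i y + single i i (x * y) := by
  rw [transvection, transvection, mul_add, mul_one, add_mul, one_mul, single_mul_single_same]
  abel

theorem diagonal_add_single_mul_transvection_mul_transvection {i j : n} (hij : i ≠ j)
    (d : n → R) (c e q : R) (u : Rˣ) (hi : d i = c * e) (hj : d j = e * q) :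
    (diagonal d + single j i (e * u)) *
        (transvection i j (-((q - 1) * ↑u⁻¹)) * transvection j i (-(u : R))) =
      transvection i j (-(c * (q - 1) * ↑u⁻¹)) *
        diagonal (Function.update (Function.update d i (d i * q)) j e) := by
  rw [transvection_mul_transvection_swap]
  simp only [transvection, mul_add, add_mul, mul_one, one_mul, diagonal_mul_single,
    single_mul_diagonal, single_mul_single_same, single_mul_single_of_ne _ _ _ _ hij]
  ext a b
  simp only [add_apply, diagonal_apply, single_apply, Function.update_apply, zero_apply]
  split_ifs <;> grind [Units.mul_inv]

end Matrix

theorem degeneration_transvections_general {O : Type*} [CommRing O] (p : O) (n : ℕ) [NeZero n]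
    (r : Fin n → ℕ) (j : Fin n) (hj : j ≠ 0) (b : ℕ)
    (hb : b ≤ r j) (hbr : r j ≤ r 0 + b) (t : Oˣ) :
    ∃ Lx Ly : List (Matrix.TransvectionStruct (Fin n) O),
      (Matrix.diagonal (fun m => p ^ r m) +
          Matrix.single j 0 (p ^ (r j - b) * (t : O))) *
        (Ly.map Matrix.TransvectionStruct.toMatrix).prod =
      (Lx.map Matrix.TransvectionStruct.toMatrix).prod *
        Matrix.diagonal (fun m =>
          if m = 0 then p ^ (r 0 + b) else if m = j then p ^ (r j - b) else p ^ r m) := by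
  refine ⟨[⟨0, j, hj.symm, -(p ^ (r 0 + b - r j) * (p ^ b - 1) * ↑t⁻¹)⟩],
    [⟨0, j, hj.symm, -((p ^ b - 1) * ↑t⁻¹)⟩, ⟨j, 0, hj, -(t : O)⟩], ?_⟩
  have hp0 : p ^ r 0 = p ^ (r 0 + b - r j) * p ^ (r j - b) := by rw [← pow_add]; congr 1; omega
  have hpj : p ^ r j = p ^ (r j - b) * p ^ b := by rw [← pow_add]; congr 1; omega
  have hη' : (fun m => if m = 0 then p ^ (r 0 + b) else if m = j then p ^ (r j - b) else p ^ r m)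
      = Function.update (Function.update (fun m => p ^ r m) 0 (p ^ r 0 * p ^ b)) j
          (p ^ (r j - b)) := by
    funext m
    by_cases hm0 : m = 0 <;> by_cases hmj : m = j <;> simp_all [pow_add]
  simpa [hη'] using
    Matrix.diagonal_add_single_mul_transvection_mul_transvection hj.symm _ _ _ _ t hp0 hpj

/-- Let `η = diag(p^r₁, …, p^rₙ)` with `r₁ ≥ … ≥ rₙ ≥ 0` and, for an index `j ≠ 1` and
`0 ≤ b ≤ r_j` with `r₁ + b ≥ r_j`, let `η' = diag(p^(r₁+b), p^r₂, …, p^(r_j−b), …, p^rₙ)`.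
For every unit `t`, the matrix `η(t) = η + p^(r_j−b)·t·E_{j,1}` satisfies
`η(t) = x·η'·y⁻¹` with `x, y` products of elementary unitriangular (transvection)
matrices; equivalently `η(t)·y = x·η'`. -/
theorem degeneration_transvections {O : Type*} [CommRing O] (p : O) (n : ℕ) [NeZero n]
    (r : Fin n → ℕ) (hr : Antitone r) (j : Fin n) (hj : j ≠ 0) (b : ℕ)
    (hb : b ≤ r j) (hbr : r j ≤ r 0 + b) (t : Oˣ) :
    ∃ Lx Ly : List (Matrix.TransvectionStruct (Fin n) O),
      (Matrix.diagonal (fun m => p ^ r m) +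
          Matrix.single j 0 (p ^ (r j - b) * (t : O))) *
        (Ly.map Matrix.TransvectionStruct.toMatrix).prod =
      (Lx.map Matrix.TransvectionStruct.toMatrix).prod *
        Matrix.diagonal (fun m =>
          if m = 0 then p ^ (r 0 + b) else if m = j then p ^ (r j - b) else p ^ r m) :=
  degeneration_transvections_general p n r j hj b hb hbr t
end
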